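/- arXiv:2303.15884 — 3 statements merged into one kernel-verified Lean document; each statement's English description precedes it below -/
import Mathlib

section
/- Let R be a reduced extended affine root system and let P ⊆ R^× be nonempty and connected, and set R_P = W_P·P ∪ ((W_P·P − W_P·P) ∩ R⁰) as above. (i) If W_P = W (as subgroups of GL(Ṽ)), then R_P has the same rank and nullity as R: span_ℝ((R_P)⁰) = V⁰ and dim span_ℝ R_P = dim V. (ii) If P is a reflectable set for R, then R_P = R. -/
open Pointwise
open scoped Classical

noncomputable section

namespace EARSPaper

variable {V : Type*} [AddCommGroup V] [Module ℝ V]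

/-- The reflection based on `a`: `x ↦ x - (2 B(x,a)/B(a,a)) • a`.
By the division-by-zero convention this is the identity map when `B a a = 0`. -/
def reflMap (B : LinearMap.BilinForm ℝ V) (a : V) : V →ₗ[ℝ] V :=
  LinearMap.id - ((2 / B a a) • B.flip a).smulRight a

theorem reflMap_apply (B : LinearMap.BilinForm ℝ V) (a x : V) :
    reflMap B a x = x - (2 / B a a * B x a) • a := by
  simp [reflMap, LinearMap.smulRight_apply, LinearMap.smul_apply, smul_eq_mul]

theorem reflMap_invol (B : LinearMap.BilinForm ℝ V) (a x : V) :
    reflMap B a (reflMap B a x) = x := by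
  rcases eq_or_ne (B a a) 0 with h | h
  · simp [reflMap_apply, h]
  · rw [reflMap_apply, reflMap_apply]
    rw [map_sub, map_smul, LinearMap.sub_apply, LinearMap.smul_apply, smul_eq_mul]
    have hs : 2 / B a a * (B x a - 2 / B a a * B x a * B a a) = -(2 / B a a * B x a) := by
      field_simp
      ring
    rw [hs, neg_smul, sub_neg_eq_add, sub_add_cancel]

/-- The reflection based on `a` as a linear automorphism of `V`. -/
def reflEquiv (B : LinearMap.BilinForm ℝ V) (a : V) : V ≃ₗ[ℝ] V :=
  LinearEquiv.ofLinear (reflMap B a) (reflMap B a)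
    (LinearMap.ext fun x => reflMap_invol B a x)
    (LinearMap.ext fun x => reflMap_invol B a x)

@[simp] theorem reflEquiv_apply (B : LinearMap.BilinForm ℝ V) (a x : V) :
    reflEquiv B a x = reflMap B a x := rfl

/-- The set of nonisotropic elements of `R`. -/
def nonIso (B : LinearMap.BilinForm ℝ V) (R : Set V) : Set V := {a ∈ R | B a a ≠ 0}

/-- Connectedness of a set with respect to the form. -/
def IsConnSet (B : LinearMap.BilinForm ℝ V) (P : Set V) : Prop :=
  ¬ ∃ P₁ P₂ : Set V, P₁.Nonempty ∧ P₂.Nonempty ∧ P₁ ∪ P₂ = P ∧ P₁ ∩ P₂ = ∅ ∧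
      ∀ a ∈ P₁, ∀ b ∈ P₂, B a b = 0

/-- Extended affine root system (axioms (R1)-(R6), for a positive semidefinite
symmetric bilinear form). -/
structure IsEARS (B : LinearMap.BilinForm ℝ V) (R : Set V) : Prop where
  symm : ∀ x y : V, B x y = B y x
  posSemidef : ∀ x : V, 0 ≤ B x x
  lattice : ∃ s : Set V, LinearIndependent ℝ ((↑) : s → V) ∧
      Submodule.span ℝ s = ⊤ ∧ AddSubgroup.closure R = AddSubgroup.closure s
  integrality : ∀ a ∈ nonIso B R, ∀ b ∈ nonIso B R, ∃ n : ℤ, 2 * B b a / B a a = (n : ℝ)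
  reflInvariant : ∀ a ∈ nonIso B R, ∀ b ∈ R, reflMap B a b ∈ R
  isoEq : R ∩ (LinearMap.ker B : Set V) =
      (LinearMap.ker B : Set V) ∩ (nonIso B R - nonIso B R)
  notTwice : ∀ a ∈ nonIso B R, (2 : ℝ) • a ∉ R
  conn : IsConnSet B (nonIso B R)

/-- `R` is reduced: no `α, β ∈ R^×` with `α - 2β ∈ V⁰`. -/
def IsReduced (B : LinearMap.BilinForm ℝ V) (R : Set V) : Prop :=
  ¬ ∃ a ∈ nonIso B R, ∃ b ∈ nonIso B R, a - (2 : ℝ) • b ∈ LinearMap.ker B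

/-- `R` is simply laced: the form takes a single value on `R^×`. -/
def IsSimplyLaced (B : LinearMap.BilinForm ℝ V) (R : Set V) : Prop :=
  ∀ a ∈ nonIso B R, ∀ b ∈ nonIso B R, B a a = B b b

/-- The nullity: the dimension of the radical of the form. -/
def nullity (B : LinearMap.BilinForm ℝ V) : ℕ := Module.finrank ℝ ↥(LinearMap.ker B)

/-- The rank: `dim V - nullity`. -/
def rank (B : LinearMap.BilinForm ℝ V) : ℕ := Module.finrank ℝ V - nullity B

/-- The group generated by the reflections `w_a`, `a ∈ P`, acting on `V`. -/
def weylOn (B : LinearMap.BilinForm ℝ V) (P : Set V) : Subgroup (V ≃ₗ[ℝ] V) :=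
  Subgroup.closure (reflEquiv B '' P)

/-- The set `W_P ⬝ P = {w a : w ∈ W_P, a ∈ P}`. -/
def reflOrbit (B : LinearMap.BilinForm ℝ V) (P : Set V) : Set V :=
  {x | ∃ w ∈ weylOn B P, ∃ a ∈ P, w a = x}

/-- `P` is a reflectable set for `R`: `P ⊆ R^×` and `W_P ⬝ P = R^×`. -/
def IsReflSet (B : LinearMap.BilinForm ℝ V) (R P : Set V) : Prop :=
  P ⊆ nonIso B R ∧ reflOrbit B P = nonIso B R

/-- `P` is a reflectable base for `R`. -/
def IsReflBase (B : LinearMap.BilinForm ℝ V) (R P : Set V) : Prop :=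
  IsReflSet B R P ∧ ∀ Q ⊆ P, Q ≠ P → ¬ IsReflSet B R Q

/-- The space `Ṽ = V ⊕ (V⁰)*`. -/
abbrev VT (B : LinearMap.BilinForm ℝ V) : Type _ := V × Module.Dual ℝ ↥(LinearMap.ker B)

/-- The projection of `V` onto the radical `V⁰` along the fixed complement `V̇`. -/
def projRad (B : LinearMap.BilinForm ℝ V) (Vdot : Submodule ℝ V)
    (hc : IsCompl (LinearMap.ker B) Vdot) : V →ₗ[ℝ] ↥(LinearMap.ker B) :=
  (LinearMap.ker B).linearProjOfIsCompl Vdot hc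

/-- The extension of the form `B` to a nondegenerate symmetric bilinear form on
`Ṽ = V ⊕ (V⁰)*`. -/
def formT (B : LinearMap.BilinForm ℝ V) (Vdot : Submodule ℝ V)
    (hc : IsCompl (LinearMap.ker B) Vdot) : LinearMap.BilinForm ℝ (VT B) :=
  LinearMap.mk₂ ℝ
    (fun x y => B x.1 y.1 + y.2 (projRad B Vdot hc x.1) + x.2 (projRad B Vdot hc y.1))
    (fun x x' y => by
      simp only [Prod.fst_add, Prod.snd_add, map_add, LinearMap.add_apply]; ring)
    (fun c x y => by
      simp only [Prod.smul_fst, Prod.smul_snd, map_smul, LinearMap.smul_apply,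
        smul_eq_mul]; ring)
    (fun x y y' => by
      simp only [Prod.fst_add, Prod.snd_add, map_add, LinearMap.add_apply]; ring)
    (fun c x y => by
      simp only [Prod.smul_fst, Prod.smul_snd, map_smul, LinearMap.smul_apply,
        smul_eq_mul]; ring)

/-- The subgroup of `GL(Ṽ)` generated by the reflections based on `(a, 0)`, `a ∈ P`.
For `P = R^×` this is the extended affine Weyl group `W` of `R`. -/
def weylTilde (B : LinearMap.BilinForm ℝ V) (Vdot : Submodule ℝ V)
    (hc : IsCompl (LinearMap.ker B) Vdot) (P : Set V) :
    Subgroup ((VT B) ≃ₗ[ℝ] (VT B)) :=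
  Subgroup.closure ((fun a => reflEquiv (formT B Vdot hc) (a, 0)) '' P)

theorem reflT_mem_weylTilde (B : LinearMap.BilinForm ℝ V) (Vdot : Submodule ℝ V)
    (hc : IsCompl (LinearMap.ker B) Vdot) {P : Set V} {a : V} (ha : a ∈ P) :
    reflEquiv (formT B Vdot hc) (a, 0) ∈ weylTilde B Vdot hc P :=
  Subgroup.subset_closure ⟨a, ha, rfl⟩

/-- The orbit of `a ∈ V ⊆ Ṽ` under the group generated by the reflections based
on the elements of `G`. -/
def orbitT (B : LinearMap.BilinForm ℝ V) (Vdot : Submodule ℝ V)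
    (hc : IsCompl (LinearMap.ker B) Vdot) (G : Set V) (a : V) : Set V :=
  {x | ∃ w ∈ weylTilde B Vdot hc G, w (a, 0) = (x, 0)}

/-- The set `W_G ⬝ P` computed inside `Ṽ`. -/
def dotSetT (B : LinearMap.BilinForm ℝ V) (Vdot : Submodule ℝ V)
    (hc : IsCompl (LinearMap.ker B) Vdot) (G P : Set V) : Set V :=
  {x | ∃ w ∈ weylTilde B Vdot hc G, ∃ a ∈ P, w (a, 0) = (x, 0)}

/-- `R` is a minimal extended affine root system: for every `α ∈ R^×`,
`W_{R^× ∖ Wα}` is a proper subgroup of `W`. -/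
def IsMinimalEARS (B : LinearMap.BilinForm ℝ V) (Vdot : Submodule ℝ V)
    (hc : IsCompl (LinearMap.ker B) Vdot) (R : Set V) : Prop :=
  ∀ a ∈ nonIso B R,
    weylTilde B Vdot hc (nonIso B R \ orbitT B Vdot hc (nonIso B R) a)
      < weylTilde B Vdot hc (nonIso B R)

/-- The defining relators of the conjugation presented group `Ŵ`:
`ŵ_α² = 1` and `ŵ_α ŵ_β ŵ_α = ŵ_{w_α(β)}`, for `α, β ∈ R^×`. -/
def conjRels (B : LinearMap.BilinForm ℝ V) (R : Set V) :
    Set (FreeGroup ↥(nonIso B R)) :=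
  {r | (∃ a : ↥(nonIso B R), r = FreeGroup.of a * FreeGroup.of a) ∨
      (∃ a b c : ↥(nonIso B R), (c : V) = reflMap B (a : V) (b : V) ∧
        r = FreeGroup.of a * FreeGroup.of b * FreeGroup.of a * (FreeGroup.of c)⁻¹)}

/-- The conjugation presented group `Ŵ` associated with `R`. -/
abbrev WHat (B : LinearMap.BilinForm ℝ V) (R : Set V) := PresentedGroup (conjRels B R)

/-- The generator `ŵ_α` of `Ŵ`. -/
def wHat (B : LinearMap.BilinForm ℝ V) (R : Set V) (a : ↥(nonIso B R)) : WHat B R :=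
  PresentedGroup.of a

/-- `W` has the presentation by conjugation: the canonical epimorphism
`ψ : Ŵ → W`, `ŵ_α ↦ w_α` is an isomorphism. -/
def HasPresByConj (B : LinearMap.BilinForm ℝ V) (Vdot : Submodule ℝ V)
    (hc : IsCompl (LinearMap.ker B) Vdot) (R : Set V) : Prop :=
  ∃ ψ : WHat B R →* ↥(weylTilde B Vdot hc (nonIso B R)),
    (∀ a : ↥(nonIso B R),
      ((ψ (wHat B R a) : (VT B) ≃ₗ[ℝ] (VT B))) =
        reflEquiv (formT B Vdot hc) ((a : V), 0)) ∧
    Function.Bijective ψ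

/-- The restriction of the form to a subspace. -/
def restrictForm (B : LinearMap.BilinForm ℝ V) (U : Submodule ℝ V) :
    LinearMap.BilinForm ℝ ↥U := B.compl₁₂ U.subtype U.subtype

/-- The root system `R_P = R_P^n ∪ R_P^i` associated with a subset `P ⊆ R^×`,
where `R_P^n = W_P ⬝ P` and `R_P^i = (R_P^n - R_P^n) ∩ R⁰`. -/
def earsOf (B : LinearMap.BilinForm ℝ V) (R P : Set V) : Set V :=
  reflOrbit B P ∪
    ((reflOrbit B P - reflOrbit B P) ∩ (R ∩ (LinearMap.ker B : Set V)))

/-- The subgroup `2⟨R⟩` of `⟨R⟩`. -/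
def twoLat (R : Set V) : AddSubgroup V :=
  AddSubgroup.map (AddMonoidHom.mk' (fun x : V => x + x) (fun a b => by abel))
    (AddSubgroup.closure R)


namespace Aux

variable {V : Type*} [AddCommGroup V] [Module ℝ V]

theorem isotropic_apply (B : LinearMap.BilinForm ℝ V)
    (hsymm : ∀ x y : V, B x y = B y x) (hpsd : ∀ x : V, 0 ≤ B x x)
    {a : V} (ha : B a a = 0) (x : V) : B x a = 0 := by
  by_contra hc
  have h := hpsd (x + (-(B x x + 1) / (2 * B x a)) • a)
  simp only [map_add, LinearMap.add_apply, map_smul, LinearMap.smul_apply,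
    smul_eq_mul] at h
  rw [hsymm a x, ha] at h
  have ht : -(B x x + 1) / (2 * B x a) * B x a = -(B x x + 1) / 2 := by
    field_simp
  nlinarith [h]

theorem isotropic_mem_ker (B : LinearMap.BilinForm ℝ V)
    (hsymm : ∀ x y : V, B x y = B y x) (hpsd : ∀ x : V, 0 ≤ B x x)
    {a : V} (ha : B a a = 0) : a ∈ LinearMap.ker B := by
  rw [LinearMap.mem_ker]
  ext x
  rw [LinearMap.zero_apply, hsymm a x]
  exact isotropic_apply B hsymm hpsd ha x

theorem bilin_cs (B : LinearMap.BilinForm ℝ V)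
    (hsymm : ∀ x y : V, B x y = B y x) (hpsd : ∀ x : V, 0 ≤ B x x)
    (x y : V) : (B x y) ^ 2 ≤ B x x * B y y := by
  rcases eq_or_ne (B y y) 0 with h | h
  · rw [isotropic_apply B hsymm hpsd h x, h]
    simp
  · have h0 : 0 < B y y := lt_of_le_of_ne (hpsd y) (Ne.symm h)
    have hexp := hpsd (B y y • x - B x y • y)
    simp only [map_sub, map_smul, LinearMap.sub_apply, LinearMap.smul_apply,
      smul_eq_mul] at hexp
    rw [hsymm y x] at hexp
    nlinarith [hexp, h0]

theorem span_R_top (B : LinearMap.BilinForm ℝ V) (R : Set V) (hR : EARSPaper.IsEARS B R) :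
    Submodule.span ℝ R = ⊤ := by
  obtain ⟨s, -, hs, hcl⟩ := hR.lattice
  have h1 : AddSubgroup.closure s ≤ (Submodule.span ℝ R).toAddSubgroup := by
    rw [← hcl]
    exact (AddSubgroup.closure_le _).mpr Submodule.subset_span
  rw [eq_top_iff, ← hs, Submodule.span_le]
  exact fun x hx => h1 (AddSubgroup.subset_closure hx)

theorem mem_nonIso_sub {B : LinearMap.BilinForm ℝ V} {R : Set V} (hR : EARSPaper.IsEARS B R)
    {ρ : V} (hρ : ρ ∈ R) (h : B ρ ρ = 0) :
    ρ ∈ (LinearMap.ker B : Set V) ∧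
      ∃ a ∈ EARSPaper.nonIso B R, ∃ b ∈ EARSPaper.nonIso B R, a - b = ρ := by
  have hk : ρ ∈ (LinearMap.ker B : Set V) :=
    isotropic_mem_ker B hR.symm hR.posSemidef h
  have hmem : ρ ∈ R ∩ (LinearMap.ker B : Set V) := ⟨hρ, hk⟩
  rw [hR.isoEq] at hmem
  obtain ⟨-, hsub⟩ := hmem
  exact ⟨hk, Set.mem_sub.mp hsub⟩

theorem span_nonIso_top (B : LinearMap.BilinForm ℝ V) (R : Set V) (hR : EARSPaper.IsEARS B R) :
    Submodule.span ℝ (EARSPaper.nonIso B R) = ⊤ := by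
  rw [eq_top_iff, ← span_R_top B R hR, Submodule.span_le]
  intro ρ hρ
  rcases eq_or_ne (B ρ ρ) 0 with h | h
  · obtain ⟨-, a, ha, b, hb, hab⟩ := mem_nonIso_sub hR hρ h
    rw [← hab]
    exact Submodule.sub_mem _ (Submodule.subset_span ha) (Submodule.subset_span hb)
  · exact Submodule.subset_span ⟨hρ, h⟩


open EARSPaper in
theorem reflMap_form (B : LinearMap.BilinForm ℝ V)
    (hsymm : ∀ x y : V, B x y = B y x) (a x y : V) :
    B (reflMap B a x) (reflMap B a y) = B x y := by
  rcases eq_or_ne (B a a) 0 with h | h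
  · simp [reflMap_apply, h]
  · rw [reflMap_apply, reflMap_apply]
    simp only [map_sub, map_smul, LinearMap.sub_apply, LinearMap.smul_apply,
      smul_eq_mul]
    rw [hsymm a y]
    field_simp
    ring

open EARSPaper in
theorem reflEquiv_mul_self (B : LinearMap.BilinForm ℝ V) (a : V) :
    reflEquiv B a * reflEquiv B a = 1 :=
  LinearEquiv.ext fun x => by
    show reflEquiv B a (reflEquiv B a x) = x
    rw [reflEquiv_apply, reflEquiv_apply]
    exact reflMap_invol B a x

open EARSPaper in
theorem reflEquiv_inv (B : LinearMap.BilinForm ℝ V) (a : V) :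
    (reflEquiv B a)⁻¹ = reflEquiv B a :=
  inv_eq_of_mul_eq_one_left (reflEquiv_mul_self B a)

open EARSPaper in
theorem weylOn_props (B : LinearMap.BilinForm ℝ V) {R P : Set V}
    (hR : IsEARS B R) (hPx : P ⊆ nonIso B R) {w : V ≃ₗ[ℝ] V} (hw : w ∈ weylOn B P) :
    (∀ x y, B (w x) (w y) = B x y) ∧ (∀ a ∈ R, w a ∈ R) ∧ (∀ a ∈ R, w⁻¹ a ∈ R) := by
  induction hw using Subgroup.closure_induction with
  | mem g hg =>
    obtain ⟨a, ha, rfl⟩ := hg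
    refine ⟨fun x y => by
        rw [reflEquiv_apply, reflEquiv_apply]
        exact reflMap_form B hR.symm a x y,
      fun b hb => hR.reflInvariant a (hPx ha) b hb, ?_⟩
    rw [reflEquiv_inv]
    exact fun b hb => hR.reflInvariant a (hPx ha) b hb
  | one => exact ⟨fun x y => rfl, fun a ha => ha, fun a ha => by rwa [inv_one]⟩
  | mul g h hg hh ihg ihh =>
    refine ⟨fun x y => ?_, fun a ha => ?_, fun a ha => ?_⟩
    · show B (g (h x)) (g (h y)) = B x y
      rw [ihg.1, ihh.1]
    · exact ihg.2.1 _ (ihh.2.1 a ha)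
    · rw [mul_inv_rev]
      exact ihh.2.2 _ (ihg.2.2 a ha)
  | inv g hg ihg =>
    refine ⟨fun x y => ?_, fun a ha => ihg.2.2 a ha, fun a ha => by rw [inv_inv]; exact ihg.2.1 a ha⟩
    have := ihg.1 (g⁻¹ x) (g⁻¹ y)
    have hx : g (g⁻¹ x) = x := by
      show (g * g⁻¹) x = x
      rw [mul_inv_cancel]; rfl
    have hy : g (g⁻¹ y) = y := by
      show (g * g⁻¹) y = y
      rw [mul_inv_cancel]; rfl
    rw [hx, hy] at this
    exact this.symm

open EARSPaper in
theorem subset_reflOrbit (B : LinearMap.BilinForm ℝ V) (P : Set V) :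
    P ⊆ reflOrbit B P :=
  fun a ha => ⟨1, one_mem _, a, ha, rfl⟩

open EARSPaper in
theorem reflOrbit_subset_nonIso (B : LinearMap.BilinForm ℝ V) {R P : Set V}
    (hR : IsEARS B R) (hPx : P ⊆ nonIso B R) :
    reflOrbit B P ⊆ nonIso B R := by
  rintro x ⟨w, hw, a, ha, rfl⟩
  have h := weylOn_props B hR hPx hw
  exact ⟨h.2.1 a (hPx ha).1, by rw [h.1 a a]; exact (hPx ha).2⟩

open EARSPaper in
theorem reflMap_conj (B : LinearMap.BilinForm ℝ V) {w : V ≃ₗ[ℝ] V}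
    (hform : ∀ x y, B (w x) (w y) = B x y) (a x : V) :
    reflMap B (w a) x = w (reflMap B a (w.symm x)) := by
  rw [reflMap_apply, reflMap_apply, map_sub, map_smul, w.apply_symm_apply]
  have h1 : B (w a) (w a) = B a a := hform a a
  have h2 : B x (w a) = B (w.symm x) a := by
    conv_lhs => rw [← w.apply_symm_apply x]
    rw [hform]
  rw [h1, h2]

open EARSPaper in
theorem reflOrbit_closed (B : LinearMap.BilinForm ℝ V) {R P : Set V}
    (hR : IsEARS B R) (hPx : P ⊆ nonIso B R) {o b : V}
    (ho : o ∈ reflOrbit B P) (hb : b ∈ reflOrbit B P) :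
    reflMap B o b ∈ reflOrbit B P := by
  obtain ⟨w, hw, a, ha, rfl⟩ := ho
  obtain ⟨w', hw', a', ha', rfl⟩ := hb
  have hform := (weylOn_props B hR hPx hw).1
  refine ⟨w * reflEquiv B a * w⁻¹ * w', ?_, a', ha', ?_⟩
  · exact mul_mem (mul_mem (mul_mem hw
      (Subgroup.subset_closure ⟨a, ha, rfl⟩)) (inv_mem hw)) hw'
  · show w (reflEquiv B a (w⁻¹ (w' a'))) = reflMap B (w a) (w' a')
    rw [reflMap_conj B hform a (w' a'), reflEquiv_apply]
    rfl

section TildePart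

variable [FiniteDimensional ℝ V]

theorem formT_app (B : LinearMap.BilinForm ℝ V) (Vdot : Submodule ℝ V)
    (hc : IsCompl (LinearMap.ker B) Vdot) (x y : EARSPaper.VT B) :
    EARSPaper.formT B Vdot hc x y =
      B x.1 y.1 + y.2 (EARSPaper.projRad B Vdot hc x.1) +
        x.2 (EARSPaper.projRad B Vdot hc y.1) := by
  simp [EARSPaper.formT]

def fixSubgroup {M : Type*} [AddCommGroup M] [Module ℝ M] (v : M) :
    Subgroup (M ≃ₗ[ℝ] M) where
  carrier := {w | w v = v}
  one_mem' := rfl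
  mul_mem' := by
    intro a b ha hb
    rw [Set.mem_setOf_eq] at ha hb ⊢
    show a (b v) = v
    rw [hb, ha]
  inv_mem' := by
    intro a ha
    rw [Set.mem_setOf_eq] at ha ⊢
    show a.symm v = v
    conv_lhs => rw [← ha]
    exact a.symm_apply_apply v

theorem mem_fixSubgroup {M : Type*} [AddCommGroup M] [Module ℝ M] {v : M}
    {w : M ≃ₗ[ℝ] M} : w ∈ fixSubgroup v ↔ w v = v := Iff.rfl

open EARSPaper in
theorem weylTilde_fixes (B : LinearMap.BilinForm ℝ V) (Vdot : Submodule ℝ V)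
    (hc : IsCompl (LinearMap.ker B) Vdot) {P : Set V} {v : VT B}
    (hv : ∀ a ∈ P, formT B Vdot hc v (a, 0) = 0) {w : VT B ≃ₗ[ℝ] VT B}
    (hw : w ∈ weylTilde B Vdot hc P) : w v = v := by
  have hle : weylTilde B Vdot hc P ≤ fixSubgroup v := by
    apply (Subgroup.closure_le _).mpr
    rintro g ⟨a, ha, rfl⟩
    rw [SetLike.mem_coe, mem_fixSubgroup, reflEquiv_apply, reflMap_apply, hv a ha,
      mul_zero, zero_smul, sub_zero]
  exact hle hw

open EARSPaper in
theorem perp_nonIso (B : LinearMap.BilinForm ℝ V) (Vdot : Submodule ℝ V)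
    (hc : IsCompl (LinearMap.ker B) Vdot) {R P : Set V} (hR : IsEARS B R)
    (hW : weylTilde B Vdot hc P = weylTilde B Vdot hc (nonIso B R))
    {v : VT B} (hv : ∀ a ∈ P, formT B Vdot hc v (a, 0) = 0) :
    ∀ α ∈ nonIso B R, formT B Vdot hc v (α, 0) = 0 := by
  intro α hα
  have hmem : reflEquiv (formT B Vdot hc) ((α : V), 0) ∈ weylTilde B Vdot hc P := by
    rw [hW]; exact reflT_mem_weylTilde B Vdot hc hα
  have hfix := weylTilde_fixes B Vdot hc hv hmem
  rw [reflEquiv_apply, reflMap_apply] at hfix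
  have h1 := sub_eq_self.mp hfix
  rcases smul_eq_zero.mp h1 with h | h
  · have hN : formT B Vdot hc ((α : V), (0 : Module.Dual ℝ ↥(LinearMap.ker B)))
        (α, 0) = B α α := by
      rw [formT_app]; simp
    rw [hN] at h
    rcases mul_eq_zero.mp h with h' | h'
    · exact absurd h' (div_ne_zero two_ne_zero hα.2)
    · exact h'
  · exfalso
    apply hα.2
    have hα0 : α = 0 := congrArg Prod.fst h
    rw [hα0]
    simp

open EARSPaper in
theorem perp_conclusion (B : LinearMap.BilinForm ℝ V) (Vdot : Submodule ℝ V)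
    (hc : IsCompl (LinearMap.ker B) Vdot) {R : Set V} (hR : IsEARS B R)
    {v : VT B} (hv : ∀ α ∈ nonIso B R, formT B Vdot hc v (α, 0) = 0) :
    v.1 ∈ LinearMap.ker B ∧ v.2 = 0 := by
  have hvR : ∀ ρ ∈ R, formT B Vdot hc v (ρ, 0) = 0 := by
    intro ρ hρ
    rcases eq_or_ne (B ρ ρ) 0 with h | h
    · obtain ⟨-, a, ha, b, hb, hab⟩ := mem_nonIso_sub hR hρ h
      have hsplit : ((ρ : V), (0 : Module.Dual ℝ ↥(LinearMap.ker B)))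
          = ((a : V), (0 : Module.Dual ℝ ↥(LinearMap.ker B))) - (b, 0) := by
        rw [Prod.mk_sub_mk, sub_zero, hab]
      rw [hsplit, map_sub, hv a ha, hv b hb, sub_zero]
    · exact hv ρ ⟨hρ, h⟩
  have hall : ∀ y : V, formT B Vdot hc v (y, 0) = 0 := by
    have hsub : Submodule.span ℝ R ≤ LinearMap.ker
        ((formT B Vdot hc v).comp (LinearMap.inl ℝ V (Module.Dual ℝ ↥(LinearMap.ker B)))) := by
      rw [Submodule.span_le]
      intro ρ hρ
      rw [SetLike.mem_coe, LinearMap.mem_ker, LinearMap.comp_apply, LinearMap.inl_apply]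
      exact hvR ρ hρ
    rw [span_R_top B R hR] at hsub
    intro y
    have := hsub (Submodule.mem_top : y ∈ ⊤)
    rwa [LinearMap.mem_ker, LinearMap.comp_apply, LinearMap.inl_apply] at this
  have hv2 : v.2 = 0 := by
    ext σ
    have h := hall (σ : V)
    rw [formT_app] at h
    have hπ : projRad B Vdot hc (σ : V) = σ :=
      Submodule.linearProjOfIsCompl_apply_left hc σ
    have hBσ : B v.1 (σ : V) = 0 := by
      rw [hR.symm]
      have : B (σ : V) = 0 := σ.2
      rw [this]
      rfl
    rw [hπ, hBσ] at h
    simpa using h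
  refine ⟨?_, hv2⟩
  rw [LinearMap.mem_ker]
  ext y
  have h := hall y
  rw [formT_app, hv2] at h
  simpa using h

set_option synthInstance.maxHeartbeats 1000000 in
open EARSPaper in
theorem span_earsOf_top (B : LinearMap.BilinForm ℝ V) (Vdot : Submodule ℝ V)
    (hc : IsCompl (LinearMap.ker B) Vdot) {R P : Set V} (hR : IsEARS B R)
    (hPx : P ⊆ nonIso B R)
    (hW : weylTilde B Vdot hc P = weylTilde B Vdot hc (nonIso B R)) :
    Submodule.span ℝ (earsOf B R P) = ⊤ := by
  classical
  set ι := LinearMap.inl ℝ V (Module.Dual ℝ ↥(LinearMap.ker B)) with hι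
  set Zp := Submodule.span ℝ (ι '' (earsOf B R P)) with hZp
  set Φ : VT B →ₗ[ℝ] Module.Dual ℝ ↥Zp := Zp.subtype.dualMap ∘ₗ (formT B Vdot hc) with hΦ
  have hker : LinearMap.ker Φ ≤ Submodule.map ι (LinearMap.ker B) := by
    intro v hv
    rw [LinearMap.mem_ker] at hv
    have hperp : ∀ z ∈ earsOf B R P, formT B Vdot hc v (z, 0) = 0 := by
      intro z hz
      have hmem : ι z ∈ Zp := Submodule.subset_span ⟨z, hz, rfl⟩
      have h0 : Φ v ⟨ι z, hmem⟩ = 0 := by rw [hv]; rfl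
      exact h0
    have hP : ∀ a ∈ P, formT B Vdot hc v (a, 0) = 0 := fun a ha =>
      hperp a (Set.mem_union_left _ (subset_reflOrbit B P ha))
    have hconc := perp_conclusion B Vdot hc hR (perp_nonIso B Vdot hc hR hW hP)
    refine ⟨v.1, hconc.1, ?_⟩
    show (v.1, 0) = v
    rw [← hconc.2]
  have h1 := LinearMap.finrank_range_add_finrank_ker Φ
  have h2 : Module.finrank ℝ ↥(LinearMap.ker Φ) ≤ Module.finrank ℝ ↥(LinearMap.ker B) := by
    have e := Submodule.equivMapOfInjective ι LinearMap.inl_injective (LinearMap.ker B)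
    calc Module.finrank ℝ ↥(LinearMap.ker Φ)
        ≤ Module.finrank ℝ ↥(Submodule.map ι (LinearMap.ker B)) := Submodule.finrank_mono hker
      _ = Module.finrank ℝ ↥(LinearMap.ker B) := (LinearEquiv.finrank_eq e).symm
  haveI : FiniteDimensional ℝ ↥Zp := inferInstance
  haveI : Module.Free ℝ ↥Zp := Module.Free.of_divisionRing ℝ ↥Zp
  have e2 : ↥Zp ≃ₗ[ℝ] Module.Dual ℝ ↥Zp := (Module.finBasis ℝ ↥Zp).toDualEquiv
  haveI : FiniteDimensional ℝ (Module.Dual ℝ ↥Zp) := Module.Finite.equiv e2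
  have h3 : Module.finrank ℝ ↥(LinearMap.range Φ) ≤ Module.finrank ℝ ↥Zp :=
    le_trans (Submodule.finrank_le (LinearMap.range Φ))
      (le_of_eq (LinearEquiv.finrank_eq e2).symm)
  have hVT : Module.finrank ℝ (VT B) =
      Module.finrank ℝ V + Module.finrank ℝ ↥(LinearMap.ker B) := by
    rw [Module.finrank_prod, Subspace.dual_finrank_eq]
  have hZle : Zp ≤ LinearMap.range ι := by
    rw [hZp, Submodule.span_le]
    rintro z ⟨x, -, rfl⟩
    exact ⟨x, rfl⟩
  have hrange : Module.finrank ℝ ↥(LinearMap.range ι) = Module.finrank ℝ V :=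
    LinearMap.finrank_range_of_inj LinearMap.inl_injective
  have hZeq : Zp = LinearMap.range ι := by
    apply Submodule.eq_of_le_of_finrank_le hZle
    rw [hrange]
    omega
  have hfinal : Submodule.map ι (Submodule.span ℝ (earsOf B R P)) = Submodule.map ι ⊤ := by
    rw [Submodule.map_span, ← hZp, hZeq, Submodule.map_top]
  exact Submodule.map_injective_of_injective LinearMap.inl_injective hfinal

end TildePart

open EARSPaper in
theorem pairing_int_bounded (B : LinearMap.BilinForm ℝ V) {R : Set V}
    (hR : IsEARS B R) {o a : V} (ho : o ∈ nonIso B R) (ha : a ∈ nonIso B R) :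
    ∃ n : ℤ, n ∈ Finset.Icc (-4 : ℤ) 4 ∧ B o a = (n : ℝ) * B a a / 2 := by
  obtain ⟨n, hn⟩ := hR.integrality a ha o ho
  obtain ⟨m, hm⟩ := hR.integrality o ho a ha
  have haa : B a a ≠ 0 := ha.2
  have hoo : B o o ≠ 0 := ho.2
  have haa' : 0 < B a a := lt_of_le_of_ne (hR.posSemidef a) (Ne.symm haa)
  have hoo' : 0 < B o o := lt_of_le_of_ne (hR.posSemidef o) (Ne.symm hoo)
  have hn2 := hn
  have hBoa : B o a = (n : ℝ) * B a a / 2 := by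
    field_simp at hn
    linarith [hn]
  refine ⟨n, ?_, hBoa⟩
  have hcs := bilin_cs B hR.symm hR.posSemidef o a
  have hprod : (n : ℝ) * (m : ℝ) = 4 * (B o a * B o a) / (B a a * B o o) := by
    rw [← hn, ← hm, hR.symm a o]
    field_simp
    ring
  have hnm4 : (n : ℝ) * m ≤ 4 := by
    rw [hprod, div_le_iff₀ (by positivity)]
    nlinarith [hcs]
  have hnm0 : 0 ≤ (n : ℝ) * m := by
    rw [hprod]
    apply div_nonneg
    · nlinarith [mul_self_nonneg (B o a)]
    · positivity
  rcases eq_or_ne m 0 with hm0 | hm0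
  · subst hm0
    rw [Int.cast_zero] at hm
    have hao : B a o = 0 := by
      field_simp at hm
      linarith
    have hoa : B o a = 0 := by rw [hR.symm]; exact hao
    rw [hoa] at hn2
    have hn0 : (n : ℝ) = 0 := by
      rw [← hn2]
      simp
    have : n = 0 := by exact_mod_cast hn0
    subst this
    decide
  · have hZ4 : n * m ≤ 4 := by exact_mod_cast hnm4
    have hZ0 : 0 ≤ n * m := by exact_mod_cast hnm0
    have hm1 : 1 ≤ |m| := Int.one_le_abs (by simpa using hm0)
    have habs : |n| ≤ 4 := by
      calc |n| = |n| * 1 := (mul_one _).symm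
        _ ≤ |n| * |m| := mul_le_mul_of_nonneg_left hm1 (abs_nonneg n)
        _ = |n * m| := (abs_mul n m).symm
        _ = n * m := abs_of_nonneg hZ0
        _ ≤ 4 := hZ4
    obtain ⟨hl, hr⟩ := abs_le.mp habs
    exact Finset.mem_Icc.mpr ⟨hl, hr⟩

open EARSPaper in
theorem exists_finite_spanning (B : LinearMap.BilinForm ℝ V) {R : Set V}
    (hR : IsEARS B R) [FiniteDimensional ℝ V] :
    ∃ t : Set V, t ⊆ nonIso B R ∧ t.Finite ∧ Submodule.span ℝ t = ⊤ := by
  classical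
  set b := Module.finBasis ℝ V with hb
  have hmem : ∀ i, (b i) ∈ Submodule.span ℝ (nonIso B R) := by
    rw [span_nonIso_top B R hR]
    exact fun i => trivial
  choose T hT₁ hT₂ using fun i => Submodule.mem_span_finite_of_mem_span (hmem i)
  refine ⟨⋃ i, (T i : Set V), Set.iUnion_subset hT₁,
    Set.finite_iUnion (fun i => (T i).finite_toSet), ?_⟩
  rw [eq_top_iff, ← b.span_eq, Submodule.span_le]
  rintro x ⟨i, rfl⟩
  exact Submodule.span_mono (Set.subset_iUnion (fun j => ((T j : Set V))) i) (hT₂ i)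

noncomputable def qFormAux (B : LinearMap.BilinForm ℝ V)
    (hsymm : ∀ x y : V, B x y = B y x)
    (K : Submodule ℝ V) (hK : K ≤ LinearMap.ker B) :
    V →ₗ[ℝ] ((V ⧸ K) →ₗ[ℝ] ℝ) where
  toFun x := Submodule.liftQ K (B x) (by
    intro κ hκ
    rw [LinearMap.mem_ker, hsymm x κ]
    have h0 : B κ = 0 := hK hκ
    rw [h0]
    rfl)
  map_add' x y := by
    apply Submodule.linearMap_qext
    ext z
    simp
  map_smul' c x := by
    apply Submodule.linearMap_qext
    ext z
    simp

noncomputable def qForm (B : LinearMap.BilinForm ℝ V)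
    (hsymm : ∀ x y : V, B x y = B y x)
    (K : Submodule ℝ V) (hK : K ≤ LinearMap.ker B) :
    LinearMap.BilinForm ℝ (V ⧸ K) :=
  Submodule.liftQ K (qFormAux B hsymm K hK) (by
    intro κ hκ
    rw [LinearMap.mem_ker]
    apply Submodule.linearMap_qext
    ext z
    have h0 : B κ = 0 := hK hκ
    simp [qFormAux, h0])

theorem qForm_apply (B : LinearMap.BilinForm ℝ V)
    (hsymm : ∀ x y : V, B x y = B y x)
    (K : Submodule ℝ V) (hK : K ≤ LinearMap.ker B) (x y : V) :
    qForm B hsymm K hK (Submodule.Quotient.mk x) (Submodule.Quotient.mk y) = B x y := by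
  simp [qForm, qFormAux]

open EARSPaper in
theorem classes_finite [FiniteDimensional ℝ V] (B : LinearMap.BilinForm ℝ V)
    {R : Set V} (hR : IsEARS B R)
    (K : Submodule ℝ V) (hK : K ≤ LinearMap.ker B)
    {O : Set V} (hO : O ⊆ nonIso B R)
    (hdiff : ∀ o ∈ O, ∀ o' ∈ O, o - o' ∈ LinearMap.ker B → o - o' ∈ K) :
    (Submodule.Quotient.mk (p := K) '' O).Finite := by
  classical
  obtain ⟨t, ht_sub, ht_fin, ht_span⟩ := exists_finite_spanning B hR
  haveI : Finite ↥t := ht_fin.to_subtype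
  set Bq := qForm B hR.symm K hK with hBq
  set g : (V ⧸ K) → (↥t → ℝ) :=
    fun y a => Bq y (Submodule.Quotient.mk (a : V)) with hg
  have hinj : Set.InjOn g (Submodule.Quotient.mk (p := K) '' O) := by
    rintro y ⟨o, ho, rfl⟩ y' ⟨o', ho', rfl⟩ hgy
    have hker : o - o' ∈ LinearMap.ker B := by
      rw [LinearMap.mem_ker]
      have hz : ∀ a ∈ t, B (o - o') a = 0 := by
        intro a ha
        have hcong := congrFun hgy ⟨a, ha⟩
        rw [hg] at hcong
        simp only at hcong
        rw [hBq, qForm_apply, qForm_apply] at hcong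
        rw [map_sub, LinearMap.sub_apply, sub_eq_zero]
        exact hcong
      have htop : Submodule.span ℝ t ≤ LinearMap.ker (B (o - o')) := by
        rw [Submodule.span_le]
        intro a ha
        rw [SetLike.mem_coe, LinearMap.mem_ker]
        exact hz a ha
      rw [ht_span] at htop
      exact LinearMap.ker_eq_top.mp (eq_top_iff.mpr htop)
    have hKmem := hdiff o ho o' ho' hker
    rwa [Submodule.Quotient.eq]
  have hfin : {f : ↥t → ℝ | ∀ a : ↥t,
      f a ∈ (fun n : ℤ => (n : ℝ) * B (a : V) (a : V) / 2) ''
        ((Finset.Icc (-4 : ℤ) 4 : Finset ℤ) : Set ℤ)}.Finite := by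
    apply Set.Finite.pi'
    intro a
    exact ((Finset.Icc (-4 : ℤ) 4).finite_toSet).image _
  have himg : g '' (Submodule.Quotient.mk (p := K) '' O) ⊆
      {f : ↥t → ℝ | ∀ a : ↥t,
        f a ∈ (fun n : ℤ => (n : ℝ) * B (a : V) (a : V) / 2) ''
          ((Finset.Icc (-4 : ℤ) 4 : Finset ℤ) : Set ℤ)} := by
    rintro f ⟨y, ⟨o, ho, rfl⟩, rfl⟩ a
    obtain ⟨n, hn, hval⟩ := pairing_int_bounded B hR (hO ho) (ht_sub a.2)
    refine ⟨n, by simpa using hn, ?_⟩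
    rw [hg]
    simp only
    rw [hBq, qForm_apply]
    exact hval.symm
  exact Set.Finite.of_finite_image (hfin.subset himg) hinj

set_option maxHeartbeats 1000000 in
open EARSPaper in
theorem ker_le_spanD [FiniteDimensional ℝ V] (B : LinearMap.BilinForm ℝ V)
    (Vdot : Submodule ℝ V) (hc : IsCompl (LinearMap.ker B) Vdot)
    {R P : Set V} (hR : IsEARS B R) (hPx : P ⊆ nonIso B R)
    (hW : weylTilde B Vdot hc P = weylTilde B Vdot hc (nonIso B R)) :
    LinearMap.ker B ≤ Submodule.span ℝ (earsOf B R P ∩ (LinearMap.ker B : Set V)) := by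
  classical
  set O := reflOrbit B P with hO
  set Dset := earsOf B R P ∩ (LinearMap.ker B : Set V) with hD
  set K := Submodule.span ℝ Dset with hKdef
  have hKker : K ≤ LinearMap.ker B := by
    rw [hKdef, Submodule.span_le]
    exact Set.inter_subset_right
  have hOsub : O ⊆ nonIso B R := reflOrbit_subset_nonIso B hR hPx
  have hdiff : ∀ o ∈ O, ∀ o' ∈ O, o - o' ∈ LinearMap.ker B → o - o' ∈ K := by
    intro o ho o' ho' hk
    apply Submodule.subset_span
    refine ⟨?_, hk⟩
    apply Set.mem_union_right
    refine ⟨Set.sub_mem_sub ho ho', ?_⟩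
    have hmem : o - o' ∈ (LinearMap.ker B : Set V) ∩ (nonIso B R - nonIso B R) :=
      ⟨hk, Set.sub_mem_sub (hOsub ho) (hOsub ho')⟩
    rw [← hR.isoEq] at hmem
    exact hmem
  have hfin := classes_finite B hR K hKker hOsub hdiff
  have hspanE := span_earsOf_top B Vdot hc hR hPx hW
  set Bq := qForm B hR.symm K hKker with hBq
  set mkK : V →ₗ[ℝ] V ⧸ K := K.mkQ with hmk
  have hq_pair : ∀ x y : V, Bq (mkK x) (mkK y) = B x y := by
    intro x y
    rw [hBq, hmk, Submodule.mkQ_apply, Submodule.mkQ_apply, qForm_apply]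
  set S : Set (V ⧸ K) := Submodule.Quotient.mk (p := K) '' O with hS
  have hspanO : Submodule.span ℝ S = ⊤ := by
    have h1 : Submodule.map mkK (Submodule.span ℝ (earsOf B R P)) = ⊤ := by
      rw [hspanE, Submodule.map_top, hmk, Submodule.range_mkQ]
    rw [Submodule.map_span] at h1
    have h2 : (mkK '' earsOf B R P) ⊆ S ∪ {0} := by
      rintro z ⟨x, hx, rfl⟩
      rcases hx with hx | hx
      · exact Or.inl ⟨x, hx, rfl⟩
      · right
        have hxD : x ∈ Dset := by
          rw [hD]
          exact ⟨Or.inr hx, hx.2.2⟩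
        have hz : mkK x = 0 := by
          rw [hmk, Submodule.mkQ_apply, Submodule.Quotient.mk_eq_zero]
          exact Submodule.subset_span hxD
        simp [hz]
    have h3 : Submodule.span ℝ (mkK '' earsOf B R P) ≤ Submodule.span ℝ (S ∪ {0}) :=
      Submodule.span_mono h2
    rw [Submodule.span_union, h1] at h3
    have h4 : Submodule.span ℝ ({0} : Set (V ⧸ K)) = ⊥ := by simp
    rw [h4, sup_bot_eq] at h3
    exact eq_top_iff.mpr h3
  have horb_refl : ∀ o ∈ O, ∀ b ∈ O, reflMap B o b ∈ O :=
    fun o ho b hb => reflOrbit_closed B hR hPx ho hb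
  have hrefl_desc : ∀ o x : V, reflMap Bq (mkK o) (mkK x) = mkK (reflMap B o x) := by
    intro o x
    rw [reflMap_apply, reflMap_apply, map_sub, map_smul, hq_pair, hq_pair]
  set gens : Set ((V ⧸ K) ≃ₗ[ℝ] (V ⧸ K)) := (fun o : V => reflEquiv Bq (mkK o)) '' O
    with hgens
  set G := Subgroup.closure gens with hG
  have hGmaps : ∀ w, w ∈ G → (∀ y ∈ S, w y ∈ S) ∧ (∀ y ∈ S, w⁻¹ y ∈ S) := by
    intro w hw
    induction hw using Subgroup.closure_induction with
    | mem g hg =>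
      obtain ⟨o, ho, rfl⟩ := hg
      have hmapS : ∀ y ∈ S, reflEquiv Bq (mkK o) y ∈ S := by
        rintro y ⟨b, hb, rfl⟩
        rw [reflEquiv_apply]
        have hbk : Submodule.Quotient.mk (p := K) b = mkK b := rfl
        rw [hbk, hrefl_desc]
        exact ⟨reflMap B o b, horb_refl o ho b hb, rfl⟩
      exact ⟨hmapS, by rw [reflEquiv_inv]; exact hmapS⟩
    | one => exact ⟨fun y hy => hy, by rw [inv_one]; exact fun y hy => hy⟩
    | mul g h hg hh ihg ihh =>
      refine ⟨fun y hy => ihg.1 _ (ihh.1 y hy), fun y hy => ?_⟩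
      rw [mul_inv_rev]
      exact ihh.2 _ (ihg.2 y hy)
    | inv g hg ihg =>
      exact ⟨ihg.2, by intro y hy; rw [inv_inv]; exact ihg.1 y hy⟩
  haveI hSfin : Finite ↥S := hfin.to_subtype
  haveI hGfin : Finite ↥G := by
    apply Finite.of_injective
      (fun w : ↥G => (fun y : ↥S => (⟨(w : (V ⧸ K) ≃ₗ[ℝ] (V ⧸ K)) y.1,
        (hGmaps w.1 w.2).1 y.1 y.2⟩ : ↥S)))
    intro w w' hww
    have heq : ∀ y ∈ S, (w : ↥G).1 y = (w' : ↥G).1 y := by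
      intro y hy
      exact congrArg Subtype.val (congrFun hww ⟨y, hy⟩)
    apply Subtype.ext
    apply LinearEquiv.toLinearMap_injective
    apply LinearMap.ext_on hspanO
    intro y hy
    exact heq y hy
  haveI := Fintype.ofFinite ↥G
  haveI : Module.Free ℝ (V ⧸ K) := Module.Free.of_divisionRing ℝ _
  set bq := Module.finBasis ℝ (V ⧸ K) with hbq
  set B0 : LinearMap.BilinForm ℝ (V ⧸ K) :=
    ∑ i, LinearMap.smulRight (bq.coord i) (bq.coord i) with hB0
  have hB0_apply : ∀ u v, B0 u v = ∑ i, bq.coord i u * bq.coord i v := by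
    intro u v
    rw [hB0]
    rw [LinearMap.sum_apply]
    rw [LinearMap.sum_apply]
    apply Finset.sum_congr rfl
    intro i _
    rw [LinearMap.smulRight_apply, LinearMap.smul_apply, smul_eq_mul]
  have hB0_nonneg : ∀ u, 0 ≤ B0 u u := by
    intro u
    rw [hB0_apply]
    exact Finset.sum_nonneg fun i _ => mul_self_nonneg _
  have hB0_def : ∀ u, B0 u u = 0 → u = 0 := by
    intro u hu
    rw [hB0_apply] at hu
    have hz := (Finset.sum_eq_zero_iff_of_nonneg
      (fun i _ => mul_self_nonneg (bq.coord i u))).mp hu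
    apply (Module.Basis.forall_coord_eq_zero_iff bq).mp
    intro i
    exact mul_self_eq_zero.mp (hz i (Finset.mem_univ i))
  set BG : LinearMap.BilinForm ℝ (V ⧸ K) :=
    ∑ w : ↥G, B0.compl₁₂ ((w : (V ⧸ K) ≃ₗ[ℝ] (V ⧸ K)) : (V ⧸ K) →ₗ[ℝ] (V ⧸ K))
      ((w : (V ⧸ K) ≃ₗ[ℝ] (V ⧸ K)) : (V ⧸ K) →ₗ[ℝ] (V ⧸ K)) with hBG
  have hBG_apply : ∀ u v, BG u v =
      ∑ w : ↥G, B0 ((w : (V ⧸ K) ≃ₗ[ℝ] (V ⧸ K)) u) ((w : (V ⧸ K) ≃ₗ[ℝ] (V ⧸ K)) v) := by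
    intro u v
    rw [hBG, LinearMap.sum_apply, LinearMap.sum_apply]
    apply Finset.sum_congr rfl
    intro w _
    rw [LinearMap.compl₁₂_apply]
    rfl
  have hBG_inv : ∀ h : ↥G, ∀ u v,
      BG ((h : (V ⧸ K) ≃ₗ[ℝ] (V ⧸ K)) u) ((h : (V ⧸ K) ≃ₗ[ℝ] (V ⧸ K)) v) = BG u v := by
    intro h u v
    rw [hBG_apply, hBG_apply]
    calc ∑ w : ↥G, B0 ((w : (V ⧸ K) ≃ₗ[ℝ] (V ⧸ K)) ((h : (V ⧸ K) ≃ₗ[ℝ] (V ⧸ K)) u))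
          ((w : (V ⧸ K) ≃ₗ[ℝ] (V ⧸ K)) ((h : (V ⧸ K) ≃ₗ[ℝ] (V ⧸ K)) v))
        = ∑ w : ↥G, (fun x : ↥G => B0 ((x : (V ⧸ K) ≃ₗ[ℝ] (V ⧸ K)) u)
          ((x : (V ⧸ K) ≃ₗ[ℝ] (V ⧸ K)) v)) ((Equiv.mulRight h) w) := by
          apply Finset.sum_congr rfl
          intro w _
          rfl
      _ = ∑ x : ↥G, B0 ((x : (V ⧸ K) ≃ₗ[ℝ] (V ⧸ K)) u)
          ((x : (V ⧸ K) ≃ₗ[ℝ] (V ⧸ K)) v) :=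
        Equiv.sum_comp (Equiv.mulRight h)
          (fun x : ↥G => B0 ((x : (V ⧸ K) ≃ₗ[ℝ] (V ⧸ K)) u) ((x : (V ⧸ K) ≃ₗ[ℝ] (V ⧸ K)) v))
  intro σ hσ
  have hσ0 : B σ = 0 := LinearMap.mem_ker.mp hσ
  have hy0 : ∀ o ∈ O, BG (mkK σ) (mkK o) = 0 := by
    intro o ho
    have hrG : reflEquiv Bq (mkK o) ∈ G := Subgroup.subset_closure ⟨o, ho, rfl⟩
    have hfix : reflEquiv Bq (mkK o) (mkK σ) = mkK σ := by
      rw [reflEquiv_apply, reflMap_apply]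
      simp only [hq_pair]
      have hz : B σ o = 0 := by rw [hσ0]; rfl
      rw [hz, mul_zero, zero_smul, sub_zero]
    have hneg : reflEquiv Bq (mkK o) (mkK o) = -(mkK o) := by
      rw [reflEquiv_apply, reflMap_apply]
      simp only [hq_pair]
      have hBoo : B o o ≠ 0 := (hOsub ho).2
      rw [div_mul_cancel₀ 2 hBoo, two_smul]
      abel
    have h1 := (hBG_inv ⟨reflEquiv Bq (mkK o), hrG⟩ (mkK σ) (mkK o)).symm
    have hco : ((⟨reflEquiv Bq (mkK o), hrG⟩ : ↥G) : (V ⧸ K) ≃ₗ[ℝ] (V ⧸ K))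
        = reflEquiv Bq (mkK o) := rfl
    rw [hco, hfix, hneg, map_neg] at h1
    linarith [h1]
  have hy_all : ∀ z : V ⧸ K, BG (mkK σ) z = 0 := by
    have hle : Submodule.span ℝ S ≤ LinearMap.ker (BG (mkK σ)) := by
      rw [Submodule.span_le]
      rintro z ⟨o, ho, rfl⟩
      rw [SetLike.mem_coe, LinearMap.mem_ker]
      exact hy0 o ho
    rw [hspanO] at hle
    intro z
    exact LinearMap.mem_ker.mp (hle Submodule.mem_top)
  have hyy := hy_all (mkK σ)
  rw [hBG_apply] at hyy
  have hterms := (Finset.sum_eq_zero_iff_of_nonneg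
    (fun w _ => hB0_nonneg (((w : ↥G) : (V ⧸ K) ≃ₗ[ℝ] (V ⧸ K)) (mkK σ)))).mp hyy
  have h1 := hterms 1 (Finset.mem_univ 1)
  have hone : ((1 : ↥G) : (V ⧸ K) ≃ₗ[ℝ] (V ⧸ K)) (mkK σ) = mkK σ := rfl
  rw [hone] at h1
  have hzero : mkK σ = 0 := hB0_def _ h1
  rwa [hmk, Submodule.mkQ_apply, Submodule.Quotient.mk_eq_zero] at hzero

end Aux

/-- For a nonempty connected `P ⊆ R^×`: (i) if `W_P = W` then
`R_P` has the same rank and nullity as `R`; (ii) if `P` is a reflectable set,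
then `R_P = R`. -/
theorem earsOf_same_rank_nullity_and_eq
    {V : Type*} [AddCommGroup V] [Module ℝ V] [FiniteDimensional ℝ V]
    (B : LinearMap.BilinForm ℝ V) (R : Set V) (hR : IsEARS B R) (hred : IsReduced B R)
    (Vdot : Submodule ℝ V) (hc : IsCompl (LinearMap.ker B) Vdot)
    (P : Set V) (hPx : P ⊆ nonIso B R) (hne : P.Nonempty) (hconn : IsConnSet B P) :
    ((weylTilde B Vdot hc P = weylTilde B Vdot hc (nonIso B R)) →
      Submodule.span ℝ (earsOf B R P ∩ (LinearMap.ker B : Set V)) = LinearMap.ker B ∧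
      Module.finrank ℝ ↥(Submodule.span ℝ (earsOf B R P)) = Module.finrank ℝ V) ∧
    (IsReflSet B R P → earsOf B R P = R) := by
  constructor
  · intro hW
    constructor
    · apply le_antisymm
      · rw [Submodule.span_le]
        exact Set.inter_subset_right
      · exact Aux.ker_le_spanD B Vdot hc hR hPx hW
    · rw [Aux.span_earsOf_top B Vdot hc hR hPx hW]
      exact finrank_top ℝ V
  · rintro ⟨hP, hOrb⟩
    apply Set.Subset.antisymm
    · intro x hx
      rcases hx with hx | hx
      · rw [hOrb] at hx
        exact hx.1
      · exact hx.2.1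
    · intro ρ hρ
      rcases eq_or_ne (B ρ ρ) 0 with h | h
      · have hk := Aux.isotropic_mem_ker B hR.symm hR.posSemidef h
        have hmem : ρ ∈ R ∩ (LinearMap.ker B : Set V) := ⟨hρ, hk⟩
        have hmem2 := hmem
        rw [hR.isoEq] at hmem2
        right
        refine ⟨?_, hmem⟩
        show ρ ∈ reflOrbit B P - reflOrbit B P
        rw [hOrb]
        exact hmem2.2
      · left
        rw [hOrb]
        exact ⟨hρ, h⟩


end EARSPaper
end
end

section
/- Let R be a reduced extended affine root system whose extended affine Weyl group W has the presentation by conjugation (the canonical epimorphism ψ : Ŵ → W, ŵ_α ↦ w_α, is an isomorphism). Then: (a) for each fixed β ∈ R^× there is a surjective group homomorphism Φ_β : W → ℤ/2ℤ with Φ_β(w_α) = 1 if α ∈ Wβ and Φ_β(w_α) = 0 if α ∈ R^× ∖ Wβ; (b) if R has exactly two root lengths, there is a surjective group homomorphism Ψ : W → ℤ/2ℤ with Ψ(w_α) = 1 for α ∈ R_sh and Ψ(w_α) = 0 for α ∈ R_lg. -/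
open Pointwise
open scoped Classical

noncomputable section

namespace EARSPaper

variable {V : Type*} [AddCommGroup V] [Module ℝ V]

/-- Reflections preserve the (symmetric) form. -/
theorem B_reflMap_self (B : LinearMap.BilinForm ℝ V) (hsymm : ∀ x y, B x y = B y x)
    {a : V} (ha : B a a ≠ 0) (x : V) : B (reflMap B a x) (reflMap B a x) = B x x := by
  rw [reflMap_apply]
  have h1 : ∀ t : ℝ, B (x - t • a) (x - t • a)
      = B x x - t * B x a - t * B a x + t * t * B a a := by
    intro t
    simp only [map_sub, map_smul, LinearMap.sub_apply, LinearMap.smul_apply, smul_eq_mul]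
    ring
  rw [h1, hsymm a x]
  field_simp
  ring

theorem reflT_fst (B : LinearMap.BilinForm ℝ V) (Vdot : Submodule ℝ V)
    (hc : IsCompl (LinearMap.ker B) Vdot) (a x : V) :
    reflEquiv (formT B Vdot hc) (a, (0 : Module.Dual ℝ ↥(LinearMap.ker B)))
      (x, (0 : Module.Dual ℝ ↥(LinearMap.ker B))) = (reflMap B a x, 0) := by
  have hform : ∀ u v : V, formT B Vdot hc (u, 0) (v, 0) = B u v := by
    intro u v
    simp [formT]
  rw [reflEquiv_apply, reflMap_apply, hform, hform, reflMap_apply]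
  ext
  · rfl
  · simp

theorem reflMap_mem_orbitT (B : LinearMap.BilinForm ℝ V) (Vdot : Submodule ℝ V)
    (hc : IsCompl (LinearMap.ker B) Vdot) {G : Set V} {a : V} (ha : a ∈ G) {b x : V}
    (hx : x ∈ orbitT B Vdot hc G b) : reflMap B a x ∈ orbitT B Vdot hc G b := by
  obtain ⟨w, hw, hwb⟩ := hx
  refine ⟨reflEquiv (formT B Vdot hc) (a, 0) * w,
    mul_mem (reflT_mem_weylTilde B Vdot hc ha) hw, ?_⟩
  show reflEquiv (formT B Vdot hc) (a, 0) (w (b, 0)) = _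
  rw [hwb, reflT_fst]

theorem reflMap_mem_orbitT_iff (B : LinearMap.BilinForm ℝ V) (Vdot : Submodule ℝ V)
    (hc : IsCompl (LinearMap.ker B) Vdot) {G : Set V} {a : V} (ha : a ∈ G) (b x : V) :
    reflMap B a x ∈ orbitT B Vdot hc G b ↔ x ∈ orbitT B Vdot hc G b := by
  constructor
  · intro h
    have := reflMap_mem_orbitT B Vdot hc ha h
    rwa [reflMap_invol] at this
  · exact reflMap_mem_orbitT B Vdot hc ha

/-- The key construction: any reflection-invariant labelling of `R^×` by `ℤ/2ℤ`
induces a homomorphism `W → ℤ/2ℤ`, provided `W` has the presentation by conjugation. -/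
theorem exists_hom_of_presByConj (B : LinearMap.BilinForm ℝ V) (R : Set V)
    (Vdot : Submodule ℝ V) (hc : IsCompl (LinearMap.ker B) Vdot)
    (hpres : HasPresByConj B Vdot hc R)
    (f : ↥(nonIso B R) → Multiplicative (ZMod 2))
    (hf : ∀ a b c : ↥(nonIso B R), (c : V) = reflMap B (a : V) (b : V) → f c = f b) :
    ∃ Φ : ↥(weylTilde B Vdot hc (nonIso B R)) →* Multiplicative (ZMod 2),
      ∀ a, ∀ ha : a ∈ nonIso B R,
        Φ ⟨reflEquiv (formT B Vdot hc) (a, 0), reflT_mem_weylTilde B Vdot hc ha⟩ =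
          f ⟨a, ha⟩ := by
  obtain ⟨ψ, hψ, hbij⟩ := hpres
  have hsq : ∀ y : Multiplicative (ZMod 2), y * y = 1 := by decide
  have key : ∀ x y : Multiplicative (ZMod 2), x * y * x * y⁻¹ = 1 := by decide
  have hrel : ∀ r ∈ conjRels B R, FreeGroup.lift f r = 1 := by
    rintro r (⟨a, rfl⟩ | ⟨a, b, c, hcab, rfl⟩)
    · simp only [map_mul, FreeGroup.lift_apply_of]
      exact hsq (f a)
    · simp only [map_mul, map_inv, FreeGroup.lift_apply_of, hf a b c hcab]
      exact key (f a) (f b)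
  let Φhat : WHat B R →* Multiplicative (ZMod 2) := PresentedGroup.toGroup hrel
  let e := MulEquiv.ofBijective ψ hbij
  refine ⟨Φhat.comp e.symm.toMonoidHom, ?_⟩
  intro a ha
  have h1 : (⟨reflEquiv (formT B Vdot hc) (a, 0), reflT_mem_weylTilde B Vdot hc ha⟩ :
      ↥(weylTilde B Vdot hc (nonIso B R))) = e (wHat B R ⟨a, ha⟩) := by
    apply Subtype.ext
    exact (hψ ⟨a, ha⟩).symm
  rw [MonoidHom.comp_apply, h1]
  show Φhat (e.symm (e (wHat B R ⟨a, ha⟩))) = f ⟨a, ha⟩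
  rw [MulEquiv.symm_apply_apply]
  exact PresentedGroup.toGroup.of hrel

theorem mem_orbitT_self (B : LinearMap.BilinForm ℝ V) (Vdot : Submodule ℝ V)
    (hc : IsCompl (LinearMap.ker B) Vdot) (G : Set V) (b : V) :
    b ∈ orbitT B Vdot hc G b :=
  ⟨1, one_mem _, rfl⟩

/-- If `W` has the presentation by conjugation then (a) for every
`β ∈ R^×` there is a surjective homomorphism `Φ_β : W → ℤ/2ℤ` detecting the
orbit `Wβ`, and (b) if `R` has two root lengths there is a surjective
homomorphism `Ψ : W → ℤ/2ℤ` detecting short roots. -/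
theorem presByConj_epimorphisms_onto_Z2
    {V : Type*} [AddCommGroup V] [Module ℝ V] [FiniteDimensional ℝ V]
    (B : LinearMap.BilinForm ℝ V) (R : Set V) (hR : IsEARS B R) (hred : IsReduced B R)
    (Vdot : Submodule ℝ V) (hc : IsCompl (LinearMap.ker B) Vdot)
    (hpres : HasPresByConj B Vdot hc R) :
    (∀ b ∈ nonIso B R,
      ∃ Φ : ↥(weylTilde B Vdot hc (nonIso B R)) →* Multiplicative (ZMod 2),
        Function.Surjective Φ ∧
        ∀ a, ∀ ha : a ∈ nonIso B R,
          Φ ⟨reflEquiv (formT B Vdot hc) (a, 0), reflT_mem_weylTilde B Vdot hc ha⟩ =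
            Multiplicative.ofAdd
              (if a ∈ orbitT B Vdot hc (nonIso B R) b then (1 : ZMod 2) else 0)) ∧
    (∀ s l : ℝ, s < l → (∀ a ∈ nonIso B R, B a a = s ∨ B a a = l) →
      (∃ a ∈ nonIso B R, B a a = s) → (∃ a ∈ nonIso B R, B a a = l) →
      ∃ Ψ : ↥(weylTilde B Vdot hc (nonIso B R)) →* Multiplicative (ZMod 2),
        Function.Surjective Ψ ∧
        ∀ a, ∀ ha : a ∈ nonIso B R,
          Ψ ⟨reflEquiv (formT B Vdot hc) (a, 0), reflT_mem_weylTilde B Vdot hc ha⟩ =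
            Multiplicative.ofAdd (if B a a = s then (1 : ZMod 2) else 0)) := by
  have hcases : ∀ y : Multiplicative (ZMod 2),
      y = 1 ∨ y = Multiplicative.ofAdd 1 := by decide
  constructor
  · intro b hb
    set O := orbitT B Vdot hc (nonIso B R) b with hO
    obtain ⟨Φ, hΦ⟩ := exists_hom_of_presByConj B R Vdot hc hpres
      (fun a => Multiplicative.ofAdd (if (a : V) ∈ O then (1 : ZMod 2) else 0))
      (by
        rintro a₁ b₁ c₁ hcab
        congr 1
        rw [hcab, if_congr (reflMap_mem_orbitT_iff B Vdot hc a₁.2 b b₁) rfl rfl])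
    refine ⟨Φ, ?_, fun a ha => hΦ a ha⟩
    intro y
    rcases hcases y with rfl | rfl
    · exact ⟨1, map_one Φ⟩
    · refine ⟨⟨reflEquiv (formT B Vdot hc) (b, 0), reflT_mem_weylTilde B Vdot hc hb⟩, ?_⟩
      rw [hΦ b hb, if_pos (mem_orbitT_self B Vdot hc (nonIso B R) b)]
  · intro s l hsl hall hs hl
    obtain ⟨Φ, hΦ⟩ := exists_hom_of_presByConj B R Vdot hc hpres
      (fun a => Multiplicative.ofAdd (if B (a : V) (a : V) = s then (1 : ZMod 2) else 0))
      (by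
        rintro a₁ b₁ c₁ hcab
        congr 1
        have : B (c₁ : V) (c₁ : V) = B (b₁ : V) (b₁ : V) := by
          rw [hcab]
          exact B_reflMap_self B hR.symm a₁.2.2 _
        rw [this])
    refine ⟨Φ, ?_, fun a ha => hΦ a ha⟩
    intro y
    rcases hcases y with rfl | rfl
    · exact ⟨1, map_one Φ⟩
    · obtain ⟨a, ha, has⟩ := hs
      refine ⟨⟨reflEquiv (formT B Vdot hc) (a, 0), reflT_mem_weylTilde B Vdot hc ha⟩, ?_⟩
      rw [hΦ a ha, if_pos has]

end EARSPaper
end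
end

section
/- Let R be a reduced extended affine root system with extended affine Weyl group W. Then R is minimal if and only if the following holds: whenever P ⊆ R^× satisfies W_P = W and W·P = P (P is stable under the action of W), then P = R^×. -/
open Pointwise
open scoped Classical

noncomputable section

namespace EARSPaper

variable {V : Type*} [AddCommGroup V] [Module ℝ V]

/-! ### Auxiliary lemmas for Statement 18 -/

theorem formT_pair_zero' (B : LinearMap.BilinForm ℝ V) (Vdot : Submodule ℝ V)
    (hc : IsCompl (LinearMap.ker B) Vdot) (a b : V) :
    formT B Vdot hc (a, 0) (b, 0) = B a b := by
  simp [formT]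

theorem reflT_pair' (B : LinearMap.BilinForm ℝ V) (Vdot : Submodule ℝ V)
    (hc : IsCompl (LinearMap.ker B) Vdot) (a b : V) :
    reflEquiv (formT B Vdot hc) (a, 0) (b, 0) = (reflMap B a b, 0) := by
  rw [reflEquiv_apply, reflMap_apply, reflMap_apply, formT_pair_zero', formT_pair_zero']
  ext <;> simp

theorem reflMap_norm' (B : LinearMap.BilinForm ℝ V)
    (hsymm : ∀ x y : V, B x y = B y x) (a b : V) :
    B (reflMap B a b) (reflMap B a b) = B b b := by
  rw [reflMap_apply]
  rcases eq_or_ne (B a a) 0 with h | h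
  · simp [h]
  · simp only [map_sub, map_smul, LinearMap.sub_apply, LinearMap.smul_apply, smul_eq_mul]
    rw [hsymm a b]
    field_simp
    ring

theorem reflMap_mem_nonIso' (B : LinearMap.BilinForm ℝ V) {R : Set V} (hR : IsEARS B R)
    {a b : V} (ha : a ∈ nonIso B R) (hb : b ∈ nonIso B R) :
    reflMap B a b ∈ nonIso B R := by
  refine ⟨hR.reflInvariant a ha b hb.1, ?_⟩
  rw [reflMap_norm' B hR.symm]
  exact hb.2

theorem weylTilde_mono' (B : LinearMap.BilinForm ℝ V) (Vdot : Submodule ℝ V)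
    (hc : IsCompl (LinearMap.ker B) Vdot) {P Q : Set V} (h : P ⊆ Q) :
    weylTilde B Vdot hc P ≤ weylTilde B Vdot hc Q :=
  Subgroup.closure_mono (Set.image_mono h)

/-- Every element of the extended affine Weyl group maps `R^× × {0}` into itself. -/
theorem weylTilde_stable' (B : LinearMap.BilinForm ℝ V) (Vdot : Submodule ℝ V)
    (hc : IsCompl (LinearMap.ker B) Vdot) {R : Set V} (hR : IsEARS B R)
    {w : (VT B) ≃ₗ[ℝ] (VT B)} (hw : w ∈ weylTilde B Vdot hc (nonIso B R)) :
    (∀ b ∈ nonIso B R, ∃ x ∈ nonIso B R, w (b, 0) = (x, 0)) ∧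
    (∀ b ∈ nonIso B R, ∃ x ∈ nonIso B R, w⁻¹ (b, 0) = (x, 0)) := by
  refine Subgroup.closure_induction (p := fun w _ =>
      (∀ b ∈ nonIso B R, ∃ x ∈ nonIso B R, w (b, 0) = (x, 0)) ∧
      (∀ b ∈ nonIso B R, ∃ x ∈ nonIso B R, w⁻¹ (b, 0) = (x, 0))) ?_ ?_ ?_ ?_ hw
  · rintro g ⟨a, ha, rfl⟩
    have key : ∀ b ∈ nonIso B R, ∃ x ∈ nonIso B R,
        reflEquiv (formT B Vdot hc) (a, 0) (b, 0) = (x, 0) := by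
      intro b hb
      exact ⟨reflMap B a b, reflMap_mem_nonIso' B hR ha hb, reflT_pair' B Vdot hc a b⟩
    refine ⟨key, fun b hb => ?_⟩
    obtain ⟨x, hx, hgx⟩ := key b hb
    refine ⟨x, hx, ?_⟩
    have : reflEquiv (formT B Vdot hc) (a, 0) (x, 0) = (b, 0) := by
      rw [← hgx]
      exact reflMap_invol (formT B Vdot hc) (a, 0) (b, 0)
    rw [← this]
    exact (reflEquiv (formT B Vdot hc) (a, 0)).symm_apply_apply (x, 0)
  · exact ⟨fun b hb => ⟨b, hb, rfl⟩, fun b hb => ⟨b, hb, rfl⟩⟩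
  · rintro w₁ w₂ _ _ ⟨h₁, h₁'⟩ ⟨h₂, h₂'⟩
    constructor
    · intro b hb
      obtain ⟨x, hx, hx2⟩ := h₂ b hb
      obtain ⟨y, hy, hy1⟩ := h₁ x hx
      exact ⟨y, hy, by show w₁ (w₂ (b, 0)) = _; rw [hx2, hy1]⟩
    · intro b hb
      obtain ⟨x, hx, hx1⟩ := h₁' b hb
      obtain ⟨y, hy, hy2⟩ := h₂' x hx
      refine ⟨y, hy, ?_⟩
      rw [mul_inv_rev]
      show w₂⁻¹ (w₁⁻¹ (b, 0)) = _
      rw [hx1, hy2]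
  · rintro w _ ⟨h, h'⟩
    exact ⟨h', by simpa using h⟩


/-- `R` is minimal if and only if every `W`-stable subset
`P ⊆ R^×` with `W_P = W` equals `R^×`. -/
theorem minimal_iff_stable_generating_subset_eq
    {V : Type*} [AddCommGroup V] [Module ℝ V] [FiniteDimensional ℝ V]
    (B : LinearMap.BilinForm ℝ V) (R : Set V) (hR : IsEARS B R) (hred : IsReduced B R)
    (Vdot : Submodule ℝ V) (hc : IsCompl (LinearMap.ker B) Vdot) :
    IsMinimalEARS B Vdot hc R ↔
      ∀ P ⊆ nonIso B R,
        weylTilde B Vdot hc P = weylTilde B Vdot hc (nonIso B R) →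
        dotSetT B Vdot hc (nonIso B R) P = P →
        P = nonIso B R := by
  constructor
  · -- minimal → property
    intro hmin P hP hgen hstab
    by_contra hne
    obtain ⟨a, ha, haP⟩ : ∃ a ∈ nonIso B R, a ∉ P := by
      rcases Set.not_subset.mp (fun hsub => hne (le_antisymm hP hsub)) with ⟨a, ha, haP⟩
      exact ⟨a, ha, haP⟩
    have hPsub : P ⊆ nonIso B R \ orbitT B Vdot hc (nonIso B R) a := by
      intro b hb
      refine ⟨hP hb, ?_⟩
      rintro ⟨w, hw, hwa⟩
      apply haP
      rw [← hstab]
      refine ⟨w⁻¹, inv_mem hw, b, hb, ?_⟩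
      rw [← hwa]
      exact w.symm_apply_apply (a, 0)
    have hle := weylTilde_mono' B Vdot hc hPsub
    rw [hgen] at hle
    exact (hmin a ha).not_ge hle
  · -- property → minimal
    intro h a ha
    have hle := weylTilde_mono' B Vdot hc
      (Set.diff_subset : nonIso B R \ orbitT B Vdot hc (nonIso B R) a ⊆ nonIso B R)
    refine lt_of_le_of_ne hle ?_
    intro heq
    set P := nonIso B R \ orbitT B Vdot hc (nonIso B R) a with hPdef
    have hstab : dotSetT B Vdot hc (nonIso B R) P = P := by
      apply Set.eq_of_subset_of_subset
      · rintro x ⟨w, hw, b, hb, hwb⟩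
        have hx : x ∈ nonIso B R := by
          obtain ⟨y, hy, hwy⟩ := (weylTilde_stable' B Vdot hc hR hw).1 b hb.1
          rw [hwb] at hwy
          exact (Prod.mk.injEq .. ▸ hwy).1 ▸ hy
        refine ⟨hx, ?_⟩
        rintro ⟨v, hv, hva⟩
        apply hb.2
        refine ⟨w⁻¹ * v, mul_mem (inv_mem hw) hv, ?_⟩
        show w⁻¹ (v (a, 0)) = _
        rw [hva, ← hwb]
        exact w.symm_apply_apply (b, 0)
      · intro x hx
        exact ⟨1, one_mem _, x, hx, rfl⟩
    have hPeq : P = nonIso B R := h P Set.diff_subset heq hstab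
    have haP : a ∈ P := hPeq ▸ ha
    exact haP.2 ⟨1, one_mem _, rfl⟩


end EARSPaper
end
end
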